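/- In any OP word, the chain relation never crosses itself: if χ(i,j) and χ(h,k) for positions i,j,h,k, then i < h < j implies k ≤ j, and i < k < j implies i ≤ h. -/

import Mathlib

noncomputable section

namespace OPLTheory

attribute [local instance] Classical.propDecidable

/-- The three operator precedence relations `⋖`, `≐`, `⋗`. -/
inductive Prec : Type where
  | lt : Prec
  | eq : Prec
  | gt : Prec

/-- An operator precedence matrix over alphabet `α`; the delimiter `#` is `none`. -/
abbrev OPM (α : Type) : Type := Option α → Option α → Option Prec

mutual
  /-- `Chain prec i j`: positions `i` and `j` are the left and right contexts of a
      (simple or composed) chain, w.r.t. the precedence assignment `prec` on positions. -/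
  inductive Chain (prec : ℕ → ℕ → Option Prec) : ℕ → ℕ → Prop where
    | mk {i k j : ℕ} : i < k → prec i k = some Prec.lt →
        Gap prec i k → Body prec k j → Chain prec i j
  /-- The body of a chain, from one of its terminals to the right context. -/
  inductive Body (prec : ℕ → ℕ → Option Prec) : ℕ → ℕ → Prop where
    | last {k j : ℕ} : k < j → prec k j = some Prec.gt → Gap prec k j → Body prec k j
    | step {k k' j : ℕ} : k < k' → prec k k' = some Prec.eq → Gap prec k k' →
        Body prec k' j → Body prec k j
  /-- The gap between two consecutive terminals: empty or an inner chain. -/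
  inductive Gap (prec : ℕ → ℕ → Option Prec) : ℕ → ℕ → Prop where
    | empty {a b : ℕ} : b = a + 1 → Gap prec a b
    | chain {a b : ℕ} : Chain prec a b → Gap prec a b
end

/-- A finite OP word: positions `0, …, n+1`, where `0` and `n+1` carry `#`. -/
structure OPWord (AP : Type) : Type where
  n : ℕ
  P : AP → Set ℕ

namespace OPWord

variable {AP : Type}

def lab (w : OPWord AP) (i : ℕ) : Option (Set AP) :=
  if i = 0 ∨ w.n + 1 ≤ i then none else some {a | i ∈ w.P a}

def prec (w : OPWord AP) (M : OPM (Set AP)) (i j : ℕ) : Option Prec := M (w.lab i) (w.lab j)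

def ltp (w : OPWord AP) (M : OPM (Set AP)) (i j : ℕ) : Prop := w.prec M i j = some Prec.lt
def eqp (w : OPWord AP) (M : OPM (Set AP)) (i j : ℕ) : Prop := w.prec M i j = some Prec.eq
def gtp (w : OPWord AP) (M : OPM (Set AP)) (i j : ℕ) : Prop := w.prec M i j = some Prec.gt

/-- The chain relation χ. -/
def chi (w : OPWord AP) (M : OPM (Set AP)) (i j : ℕ) : Prop :=
  i + 1 < j ∧ j ≤ w.n + 1 ∧ Chain (w.prec M) i j

/-- Compatibility of a word with an OPM: consecutive letters and chain contexts
    have a defined precedence relation. -/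
def Compatible (w : OPWord AP) (M : OPM (Set AP)) : Prop :=
  (∀ i, i ≤ w.n → (w.prec M i (i + 1)).isSome) ∧
  (∀ i j, j ≤ w.n + 1 → Chain (w.prec M) i j → (w.prec M i j).isSome)

end OPWord

/-- An OP ω-word: positions are all of `ℕ`; position `0` carries `#`. -/
structure OPWordW (AP : Type) : Type where
  P : AP → Set ℕ

namespace OPWordW

variable {AP : Type}

def lab (w : OPWordW AP) (i : ℕ) : Option (Set AP) :=
  if i = 0 then none else some {a | i ∈ w.P a}

def prec (w : OPWordW AP) (M : OPM (Set AP)) (i j : ℕ) : Option Prec := M (w.lab i) (w.lab j)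

def ltp (w : OPWordW AP) (M : OPM (Set AP)) (i j : ℕ) : Prop := w.prec M i j = some Prec.lt
def eqp (w : OPWordW AP) (M : OPM (Set AP)) (i j : ℕ) : Prop := w.prec M i j = some Prec.eq
def gtp (w : OPWordW AP) (M : OPM (Set AP)) (i j : ℕ) : Prop := w.prec M i j = some Prec.gt

def chi (w : OPWordW AP) (M : OPM (Set AP)) (i j : ℕ) : Prop :=
  i + 1 < j ∧ Chain (w.prec M) i j

def Compatible (w : OPWordW AP) (M : OPM (Set AP)) : Prop :=
  (∀ i, (w.prec M i (i + 1)).isSome) ∧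
  (∀ i j, Chain (w.prec M) i j → (w.prec M i j).isSome)

end OPWordW

/-- An abstract frame on which the temporal logics are interpreted:
    atomic satisfaction, the chain relation, the precedence of positions,
    and validity of positions (for finite words). -/
structure PFrame (AP : Type) : Type where
  atomSat : AP → ℕ → Prop
  chi : ℕ → ℕ → Prop
  pr : ℕ → ℕ → Option Prec
  valid : ℕ → Prop

namespace PFrame

variable {AP : Type} (F : PFrame AP)

def ltp (i j : ℕ) : Prop := F.pr i j = some Prec.lt
def eqp (i j : ℕ) : Prop := F.pr i j = some Prec.eq
def gtp (i j : ℕ) : Prop := F.pr i j = some Prec.gt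

/-- `i ⋖ j` or `i ≐ j` (used by downward operators). -/
def deq (i j : ℕ) : Prop := F.ltp i j ∨ F.eqp i j
/-- `i ⋗ j` or `i ≐ j` (used by upward operators). -/
def ueq (i j : ℕ) : Prop := F.gtp i j ∨ F.eqp i j

/-- Candidate chain-jumps of a downward summary path bounded by `bnd`. -/
def dspSet (bnd a : ℕ) : Set ℕ := {h | h ≤ bnd ∧ F.chi a h ∧ F.deq a h}

/-- One step of the downward summary path with final position `bnd`. -/
def dspStep (bnd a b : ℕ) : Prop :=
  ((F.dspSet bnd a).Nonempty ∧ b = sSup (F.dspSet bnd a)) ∨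
  (¬ (F.dspSet bnd a).Nonempty ∧ b = a + 1 ∧ F.deq a b)

def uspSet (bnd a : ℕ) : Set ℕ := {h | h ≤ bnd ∧ F.chi a h ∧ F.ueq a h}

def uspStep (bnd a b : ℕ) : Prop :=
  ((F.uspSet bnd a).Nonempty ∧ b = sSup (F.uspSet bnd a)) ∨
  (¬ (F.uspSet bnd a).Nonempty ∧ b = a + 1 ∧ F.ueq a b)

/-- An upward hierarchical path with common left context `h`. -/
def IsUHP (h : ℕ) (l : List ℕ) : Prop :=
  l ≠ [] ∧ l.Chain' (· < ·) ∧ (∀ p ∈ l, F.chi h p ∧ F.ltp h p) ∧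
  l.Chain' (fun a b => ¬ ∃ k, a < k ∧ k < b ∧ F.chi h k)

/-- A downward hierarchical path with common right context `h`. -/
def IsDHP (h : ℕ) (l : List ℕ) : Prop :=
  l ≠ [] ∧ l.Chain' (· < ·) ∧ (∀ p ∈ l, F.chi p h ∧ F.gtp p h) ∧
  l.Chain' (fun a b => ¬ ∃ k, a < k ∧ k < b ∧ F.chi k h)

end PFrame

/-- `IsPath step l i j`: `l` is a path from `i` to `j` whose consecutive
    elements are related by `step`. -/
def IsPath (step : ℕ → ℕ → Prop) (l : List ℕ) (i j : ℕ) : Prop :=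
  l.head? = some i ∧ l.getLast? = some j ∧ l.Chain' step

def OPWord.frame {AP : Type} (w : OPWord AP) (M : OPM (Set AP)) : PFrame AP where
  atomSat a i := i ∈ w.P a
  chi := w.chi M
  pr := w.prec M
  valid i := i ≤ w.n + 1

def OPWordW.frame {AP : Type} (w : OPWordW AP) (M : OPM (Set AP)) : PFrame AP where
  atomSat a i := i ∈ w.P a
  chi := w.chi M
  pr := w.prec M
  valid _ := True

/-- Syntax of POTL. -/
inductive POTL (AP : Type) : Type where
  | tt : POTL AP
  | atom (a : AP) : POTL AP
  | neg (φ : POTL AP) : POTL AP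
  | orf (φ ψ : POTL AP) : POTL AP
  | nextD (φ : POTL AP) : POTL AP
  | nextU (φ : POTL AP) : POTL AP
  | backD (φ : POTL AP) : POTL AP
  | backU (φ : POTL AP) : POTL AP
  | chiFD (φ : POTL AP) : POTL AP
  | chiFU (φ : POTL AP) : POTL AP
  | chiPD (φ : POTL AP) : POTL AP
  | chiPU (φ : POTL AP) : POTL AP
  | untilD (φ ψ : POTL AP) : POTL AP
  | untilU (φ ψ : POTL AP) : POTL AP
  | sinceD (φ ψ : POTL AP) : POTL AP
  | sinceU (φ ψ : POTL AP) : POTL AP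
  | hnextD (φ : POTL AP) : POTL AP
  | hnextU (φ : POTL AP) : POTL AP
  | hbackD (φ : POTL AP) : POTL AP
  | hbackU (φ : POTL AP) : POTL AP
  | huntilD (φ ψ : POTL AP) : POTL AP
  | huntilU (φ ψ : POTL AP) : POTL AP
  | hsinceD (φ ψ : POTL AP) : POTL AP
  | hsinceU (φ ψ : POTL AP) : POTL AP

/-- Semantics of POTL on a frame. -/
def POTL.Sat {AP : Type} (F : PFrame AP) : POTL AP → ℕ → Prop
  | .tt, _ => True
  | .atom a, i => F.atomSat a i
  | .neg φ, i => ¬ POTL.Sat F φ i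
  | .orf φ ψ, i => POTL.Sat F φ i ∨ POTL.Sat F ψ i
  | .nextD φ, i => F.valid (i + 1) ∧ F.deq i (i + 1) ∧ POTL.Sat F φ (i + 1)
  | .nextU φ, i => F.valid (i + 1) ∧ F.ueq i (i + 1) ∧ POTL.Sat F φ (i + 1)
  | .backD φ, i => 1 ≤ i ∧ F.deq (i - 1) i ∧ POTL.Sat F φ (i - 1)
  | .backU φ, i => 1 ≤ i ∧ F.ueq (i - 1) i ∧ POTL.Sat F φ (i - 1)
  | .chiFD φ, i => ∃ j, F.chi i j ∧ F.deq i j ∧ POTL.Sat F φ j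
  | .chiFU φ, i => ∃ j, F.chi i j ∧ F.ueq i j ∧ POTL.Sat F φ j
  | .chiPD φ, i => ∃ j, F.chi j i ∧ F.deq j i ∧ POTL.Sat F φ j
  | .chiPU φ, i => ∃ j, F.chi j i ∧ F.ueq j i ∧ POTL.Sat F φ j
  | .untilD φ ψ, i => ∃ j, i ≤ j ∧ F.valid j ∧ ∃ l, IsPath (F.dspStep j) l i j ∧
      POTL.Sat F ψ j ∧ ∀ p ∈ l.dropLast, POTL.Sat F φ p
  | .untilU φ ψ, i => ∃ j, i ≤ j ∧ F.valid j ∧ ∃ l, IsPath (F.uspStep j) l i j ∧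
      POTL.Sat F ψ j ∧ ∀ p ∈ l.dropLast, POTL.Sat F φ p
  | .sinceD φ ψ, i => ∃ j, j ≤ i ∧ ∃ l, IsPath (F.dspStep i) l j i ∧
      POTL.Sat F ψ j ∧ ∀ p ∈ l.tail, POTL.Sat F φ p
  | .sinceU φ ψ, i => ∃ j, j ≤ i ∧ ∃ l, IsPath (F.uspStep i) l j i ∧
      POTL.Sat F ψ j ∧ ∀ p ∈ l.tail, POTL.Sat F φ p
  | .hnextU φ, i => ∃ h, h < i ∧ F.chi h i ∧ F.ltp h i ∧
      (∃ k, i < k ∧ F.chi h k ∧ F.ltp h k) ∧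
      POTL.Sat F φ (sInf {k | i < k ∧ F.chi h k ∧ F.ltp h k})
  | .hbackU φ, i => ∃ h, h < i ∧ F.chi h i ∧ F.ltp h i ∧
      (∃ k, k < i ∧ F.chi h k ∧ F.ltp h k) ∧
      POTL.Sat F φ (sSup {k | k < i ∧ F.chi h k ∧ F.ltp h k})
  | .hnextD φ, i => ∃ h, i < h ∧ F.chi i h ∧ F.gtp i h ∧
      (∃ k, i < k ∧ F.chi k h ∧ F.gtp k h) ∧
      POTL.Sat F φ (sInf {k | i < k ∧ F.chi k h ∧ F.gtp k h})
  | .hbackD φ, i => ∃ h, i < h ∧ F.chi i h ∧ F.gtp i h ∧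
      (∃ k, k < i ∧ F.chi k h ∧ F.gtp k h) ∧
      POTL.Sat F φ (sSup {k | k < i ∧ F.chi k h ∧ F.gtp k h})
  | .huntilU φ ψ, i => ∃ h l j, h < i ∧ F.IsUHP h l ∧ l.head? = some i ∧
      l.getLast? = some j ∧ POTL.Sat F ψ j ∧ ∀ p ∈ l.dropLast, POTL.Sat F φ p
  | .hsinceU φ ψ, i => ∃ h l j, h < j ∧ F.IsUHP h l ∧ l.getLast? = some i ∧
      l.head? = some j ∧ POTL.Sat F ψ j ∧ ∀ p ∈ l.tail, POTL.Sat F φ p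
  | .huntilD φ ψ, i => ∃ h l j, j < h ∧ F.IsDHP h l ∧ l.head? = some i ∧
      l.getLast? = some j ∧ POTL.Sat F ψ j ∧ ∀ p ∈ l.dropLast, POTL.Sat F φ p
  | .hsinceD φ ψ, i => ∃ h l j, i < h ∧ F.IsDHP h l ∧ l.getLast? = some i ∧
      l.head? = some j ∧ POTL.Sat F ψ j ∧ ∀ p ∈ l.tail, POTL.Sat F φ p

/-- Conjunction, as a derived POTL operator. -/
def POTL.andf {AP : Type} (φ ψ : POTL AP) : POTL AP := .neg (.orf (.neg φ) (.neg ψ))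

/-- Syntax of OPTL. `suntil`/`ssince` take the set `Π ⊆ {⋖,≐,⋗}` of precedence
    relations allowed between consecutive positions. -/
inductive OPTL (AP : Type) : Type where
  | tt : OPTL AP
  | atom (a : AP) : OPTL AP
  | neg (φ : OPTL AP) : OPTL AP
  | orf (φ ψ : OPTL AP) : OPTL AP
  | next (φ : OPTL AP) : OPTL AP
  | back (φ : OPTL AP) : OPTL AP
  | luntil (φ ψ : OPTL AP) : OPTL AP
  | lsince (φ ψ : OPTL AP) : OPTL AP
  | cnext (φ : OPTL AP) : OPTL AP
  | cback (φ : OPTL AP) : OPTL AP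
  | suntil (pi : Set Prec) (φ ψ : OPTL AP) : OPTL AP
  | ssince (pi : Set Prec) (φ ψ : OPTL AP) : OPTL AP
  | hyuntil (φ ψ : OPTL AP) : OPTL AP
  | hysince (φ ψ : OPTL AP) : OPTL AP
  | htuntil (φ ψ : OPTL AP) : OPTL AP
  | htsince (φ ψ : OPTL AP) : OPTL AP

/-- One step of an OPTL summary-until path bounded by `bnd`. -/
def optlUStep {AP : Type} (F : PFrame AP) (pi : Set Prec) (bnd a b : ℕ) : Prop :=
  (b ≤ bnd ∧ F.chi a b ∧ F.ueq a b) ∨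
  ((¬ ∃ h, h ≤ bnd ∧ F.chi a h ∧ F.ueq a h) ∧ b = a + 1 ∧ ∃ π ∈ pi, F.pr a b = some π)

/-- One step of an OPTL summary-since path whose first position is `bnd`. -/
def optlSStep {AP : Type} (F : PFrame AP) (pi : Set Prec) (bnd a b : ℕ) : Prop :=
  (bnd ≤ a ∧ F.chi a b ∧ F.deq a b) ∨
  ((¬ ∃ h, bnd ≤ h ∧ F.chi h b ∧ F.deq h b) ∧ b = a + 1 ∧ ∃ π ∈ pi, F.pr a b = some π)

/-- Semantics of OPTL on a frame. -/
def OPTL.Sat {AP : Type} (F : PFrame AP) : OPTL AP → ℕ → Prop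
  | .tt, _ => True
  | .atom a, i => F.atomSat a i
  | .neg φ, i => ¬ OPTL.Sat F φ i
  | .orf φ ψ, i => OPTL.Sat F φ i ∨ OPTL.Sat F ψ i
  | .next φ, i => F.valid (i + 1) ∧ OPTL.Sat F φ (i + 1)
  | .back φ, i => 1 ≤ i ∧ OPTL.Sat F φ (i - 1)
  | .luntil φ ψ, i => ∃ j, i ≤ j ∧ F.valid j ∧ OPTL.Sat F ψ j ∧
      ∀ p, i ≤ p → p < j → OPTL.Sat F φ p
  | .lsince φ ψ, i => ∃ j, j ≤ i ∧ OPTL.Sat F ψ j ∧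
      ∀ p, j < p → p ≤ i → OPTL.Sat F φ p
  | .cnext φ, i => ∃ j, F.chi i j ∧ F.ueq i j ∧ OPTL.Sat F φ j
  | .cback φ, i => ∃ j, F.chi j i ∧ F.deq j i ∧ OPTL.Sat F φ j
  | .suntil pi φ ψ, i => ∃ j, i ≤ j ∧ F.valid j ∧
      ∃ l, IsPath (optlUStep F pi j) l i j ∧ OPTL.Sat F ψ j ∧
        ∀ p ∈ l.dropLast, OPTL.Sat F φ p
  | .ssince pi φ ψ, i => ∃ j, j ≤ i ∧
      ∃ l, IsPath (optlSStep F pi j) l j i ∧ OPTL.Sat F ψ j ∧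
        ∀ p ∈ l.tail, OPTL.Sat F φ p
  | .hyuntil φ ψ, i => ∃ l : List ℕ, l ≠ [] ∧ l.Chain' (· < ·) ∧
      (∀ p ∈ l, i < p ∧ F.chi i p ∧ F.ltp i p) ∧
      (∀ j1, l.head? = some j1 → ∀ k, k < j1 → ¬ F.chi i k) ∧
      (∀ jn, l.getLast? = some jn → OPTL.Sat F ψ jn) ∧
      (∀ p ∈ l.dropLast, OPTL.Sat F φ p)
  | .hysince φ ψ, i => ∃ l : List ℕ, l ≠ [] ∧ l.Chain' (· < ·) ∧
      (∀ p ∈ l, i < p ∧ F.chi i p ∧ F.ltp i p) ∧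
      (∀ jn, l.getLast? = some jn → ∀ k, jn < k → ¬ F.chi i k) ∧
      (∀ j1, l.head? = some j1 → OPTL.Sat F ψ j1) ∧
      (∀ p ∈ l.tail, OPTL.Sat F φ p)
  | .htuntil φ ψ, i => ∃ l : List ℕ, l ≠ [] ∧ l.Chain' (· < ·) ∧
      (∀ p ∈ l, p < i ∧ F.chi p i ∧ F.gtp p i) ∧
      (∀ jn, l.getLast? = some jn → ∀ k, jn < k → k < i → ¬ F.chi k i) ∧
      (∀ jn, l.getLast? = some jn → OPTL.Sat F ψ jn) ∧
      (∀ p ∈ l.dropLast, OPTL.Sat F φ p)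
  | .htsince φ ψ, i => ∃ l : List ℕ, l ≠ [] ∧ l.Chain' (· < ·) ∧
      (∀ p ∈ l, p < i ∧ F.chi p i ∧ F.gtp p i) ∧
      (∀ j1, l.head? = some j1 → ∀ k, k < j1 → ¬ F.chi k i) ∧
      (∀ j1, l.head? = some j1 → OPTL.Sat F ψ j1) ∧
      (∀ p ∈ l.tail, OPTL.Sat F φ p)

/-- The OP word determined by a list of letters (position `i+1` carries letter `i`). -/
def listWord {AP : Type} (w : List (Set AP)) : OPWord AP :=
  ⟨w.length, fun a => {i | 1 ≤ i ∧ i ≤ w.length ∧ a ∈ w.getD (i - 1) ∅}⟩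

def ListCompatible {AP : Type} (M : OPM (Set AP)) (w : List (Set AP)) : Prop :=
  (listWord w).Compatible M

/-- Satisfaction of a POTL formula at (0-based) letter position `i` of a list word. -/
def POTL.SatL {AP : Type} (M : OPM (Set AP)) (w : List (Set AP)) (i : ℕ) (φ : POTL AP) :
    Prop :=
  POTL.Sat ((listWord w).frame M) φ (i + 1)

/-- Satisfaction of an OPTL formula at (0-based) letter position `i` of a list word. -/
def OPTL.SatL {AP : Type} (M : OPM (Set AP)) (w : List (Set AP)) (i : ℕ) (φ : OPTL AP) :
    Prop :=
  OPTL.Sat ((listWord w).frame M) φ (i + 1)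

/-- An operator precedence automaton with states `Q` over `(Sig, M)`. -/
structure OPA (Sig Q : Type) (M : OPM Sig) : Type where
  I : Set Q
  F : Set Q
  push : Q → Sig → Q → Prop
  shift : Q → Sig → Q → Prop
  pop : Q → Q → Q → Prop

/-- A move of an OPA between configurations `(input, state, stack)`. -/
def OPA.step {Sig Q : Type} {M : OPM Sig} (A : OPA Sig Q M) :
    List Sig × Q × List (Sig × Q) → List Sig × Q × List (Sig × Q) → Prop := fun c c' =>
  (∃ a x p q γ, c = (a :: x, p, γ) ∧ M (γ.head?.map Prod.fst) (some a) = some Prec.lt ∧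
     A.push p a q ∧ c' = (x, q, (a, p) :: γ)) ∨
  (∃ b x q r a p γ, c = (b :: x, q, (a, p) :: γ) ∧ M (some a) (some b) = some Prec.eq ∧
     A.shift q b r ∧ c' = (x, r, (b, p) :: γ)) ∨
  (∃ x q r a p γ, c = (x, q, (a, p) :: γ) ∧ M (some a) x.head? = some Prec.gt ∧
     A.pop q p r ∧ c' = (x, r, γ))

def OPA.lang {Sig Q : Type} {M : OPM Sig} (A : OPA Sig Q M) : Set (List Sig) :=
  {x | ∃ qI ∈ A.I, ∃ qF ∈ A.F, Relation.ReflTransGen A.step (x, qI, []) ([], qF, [])}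

/-- `L` is an operator precedence language over `(Sig, M)`. -/
def IsOPL {Sig : Type} (M : OPM Sig) (L : Set (List Sig)) : Prop :=
  ∃ (n : ℕ) (A : OPA Sig (Fin n) M), L = A.lang

/-- `v^k`: the `k`-fold repetition of the string `v`. -/
def listPow {α : Type} (v : List α) : ℕ → List α
  | 0 => []
  | k + 1 => v ++ listPow v k


/-! ### The alphabet of procedural traces and the OPM `M_call` -/

/-- Atomic propositions: the structural labels `call`, `ret`, `han`, `exc`,
    plus the ordinary proposition `p_A`. -/
inductive CallAP : Type where
  | call : CallAP
  | ret : CallAP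
  | han : CallAP
  | exc : CallAP
  | pA : CallAP
deriving DecidableEq

/-- The matrix `M_call` on structural labels. -/
def callPrec : CallAP → CallAP → Option Prec
  | .call, .call => some Prec.lt
  | .call, .ret => some Prec.eq
  | .call, .han => some Prec.lt
  | .call, .exc => some Prec.gt
  | .ret, .call => some Prec.gt
  | .ret, .ret => some Prec.gt
  | .ret, .han => some Prec.gt
  | .ret, .exc => some Prec.gt
  | .han, .call => some Prec.lt
  | .han, .ret => some Prec.gt
  | .han, .han => some Prec.lt
  | .han, .exc => some Prec.eq
  | .exc, .call => some Prec.gt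
  | .exc, .ret => some Prec.gt
  | .exc, .han => some Prec.gt
  | .exc, .exc => some Prec.gt
  | _, _ => none

/-- The unique structural label of a label set, if it exists. -/
def theStruct (s : Set CallAP) : Option CallAP :=
  if h : ∃! x : CallAP, x ∈ s ∧ x ≠ CallAP.pA then some h.choose else none

/-- The OPM `M_call`, lifted to label sets containing exactly one structural label;
    `#` yields precedence to anything and anything takes precedence over `#`. -/
def Mcall : OPM (Set CallAP) := fun a b =>
  match a, b with
  | none, none => none
  | none, some t => (theStruct t).bind fun _ => some Prec.lt
  | some s, none => (theStruct s).bind fun _ => some Prec.gt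
  | some s, some t => (theStruct s).bind fun x => (theStruct t).bind fun y => callPrec x y

/-- The universe of words compatible with `M_call`. -/
def Lcall : Set (List (Set CallAP)) := {w | ListCompatible Mcall w}

/-! ### First-order logic with named variables over a relational signature -/

/-- First-order formulas with binary relation symbols `R`, unary predicates `U`,
    and variables `V`. -/
inductive FOV (R U V : Type) : Type where
  | fal : FOV R U V
  | rel (r : R) (x y : V) : FOV R U V
  | un (u : U) (x : V) : FOV R U V
  | eqv (x y : V) : FOV R U V
  | imp (f g : FOV R U V) : FOV R U V
  | all (x : V) (f : FOV R U V) : FOV R U V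

namespace FOV

variable {R U V D : Type}

def Realize [DecidableEq V] (relI : R → D → D → Prop) (unI : U → D → Prop) :
    FOV R U V → (V → D) → Prop
  | .fal, _ => False
  | .rel r x y, v => relI r (v x) (v y)
  | .un u x, v => unI u (v x)
  | .eqv x y, v => v x = v y
  | .imp f g, v => Realize relI unI f v → Realize relI unI g v
  | .all x f, v => ∀ d : D, Realize relI unI f (Function.update v x d)

/-- Quantifier rank. -/
def qr : FOV R U V → ℕ
  | .fal => 0
  | .rel _ _ _ => 0
  | .un _ _ => 0
  | .eqv _ _ => 0
  | .imp f g => max f.qr g.qr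
  | .all _ f => f.qr + 1

/-- Free variables. -/
def free : FOV R U V → Set V
  | .fal => ∅
  | .rel _ x y => {x, y}
  | .un _ x => {x}
  | .eqv x y => {x, y}
  | .imp f g => f.free ∪ g.free
  | .all x f => f.free \ {x}

end FOV

/-- The relational signature of OP words: the linear order and the chain relation. -/
inductive OPRel : Type where
  | ord : OPRel
  | chain : OPRel

/-- Interpretation of the OP word signature on the positions of a finite OP word. -/
def wordRelI {AP : Type} (M : OPM (Set AP)) (w : OPWord AP) :
    OPRel → Fin (w.n + 2) → Fin (w.n + 2) → Prop
  | .ord => fun a b => (a : ℕ) < (b : ℕ)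
  | .chain => fun a b => w.chi M a b

def wordUnI {AP : Type} (w : OPWord AP) : AP → Fin (w.n + 2) → Prop :=
  fun a p => (p : ℕ) ∈ w.P a

/-- Interpretation of the OP word signature on the positions of an OP ω-word. -/
def wordRelIW {AP : Type} (M : OPM (Set AP)) (w : OPWordW AP) : OPRel → ℕ → ℕ → Prop
  | .ord => fun a b => a < b
  | .chain => fun a b => w.chi M a b

def wordUnIW {AP : Type} (w : OPWordW AP) : AP → ℕ → Prop := fun a p => p ∈ w.P a

/-! ### Unranked ordered trees -/

/-- An unranked ordered tree: nodes are sequences of child numbers; `hash` is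
    the set of nodes labeled with the delimiter `#`. -/
structure UOT (AP : Type) : Type where
  S : Set (List ℕ)
  hash : Set (List ℕ)
  L : AP → Set (List ℕ)

/-- The child relation `R_⇓`. -/
def rdown (s t : List ℕ) : Prop := ∃ k : ℕ, t = s ++ [k]

/-- The next-sibling relation `R_⇒`. -/
def rright (s t : List ℕ) : Prop := ∃ (r : List ℕ) (h : ℕ), s = r ++ [h] ∧ t = r ++ [h + 1]

namespace UOT

variable {AP : Type}

def nodeLab (T : UOT AP) (s : List ℕ) : Option (Set AP) :=
  if s ∈ T.hash then none else some {a | s ∈ T.L a}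

def prec (T : UOT AP) (M : OPM (Set AP)) (s t : List ℕ) : Option Prec :=
  M (T.nodeLab s) (T.nodeLab t)

end UOT

/-- `t` is the rightmost child of `s` (in the node set of `T`). -/
def RightmostChild {AP : Type} (T : UOT AP) (s t : List ℕ) : Prop :=
  t ∈ T.S ∧ rdown s t ∧ ¬ ∃ u ∈ T.S, rright t u

/-- The right context `Rc` of a node: its leftmost right sibling, or recursively the
    `Rc` of its parent; undefined if the node has a child in the `≐` relation with it. -/
inductive RcRel {AP : Type} (M : OPM (Set AP)) (T : UOT AP) : List ℕ → List ℕ → Prop where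
  | sib {r : List ℕ} {h : ℕ} :
      (¬ ∃ c, rdown (r ++ [h]) c ∧ c ∈ T.S ∧ T.prec M (r ++ [h]) c = some Prec.eq) →
      r ++ [h + 1] ∈ T.S →
      RcRel M T (r ++ [h]) (r ++ [h + 1])
  | up {r : List ℕ} {h : ℕ} {x : List ℕ} :
      (¬ ∃ c, rdown (r ++ [h]) c ∧ c ∈ T.S ∧ T.prec M (r ++ [h]) c = some Prec.eq) →
      r ++ [h + 1] ∉ T.S →
      RcRel M T r x →
      RcRel M T (r ++ [h]) x

/-- OPM-compatibility of a UOT (membership in `𝒯_M`). -/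
def UOT.CompatibleM {AP : Type} (T : UOT AP) (M : OPM (Set AP)) : Prop :=
  (∀ s ∈ T.S, (s ∈ T.hash ↔ s = [] ∨ RightmostChild T [] s)) ∧
  (∀ s c, s ∈ T.S → RightmostChild T s c →
    (T.prec M s c = some Prec.lt ∨ T.prec M s c = some Prec.eq)) ∧
  (∀ s c, s ∈ T.S → c ∈ T.S → rdown s c → ¬ RightmostChild T s c →
    T.prec M s c = some Prec.lt) ∧
  (∀ s r, s ∈ T.S → RcRel M T s r → T.prec M s r = some Prec.gt)

/-- `χ(i,j)` with `i ⋖ j` or `i ≐ j` (finite words). -/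
def chiDeq {AP : Type} (w : OPWord AP) (M : OPM (Set AP)) (i j : ℕ) : Prop :=
  w.chi M i j ∧ (w.ltp M i j ∨ w.eqp M i j)

/-- `tau` is the map `τ` from the positions of the finite OP word `w` to the nodes of
    the unranked ordered tree `T = τ(w)`. -/
def IsTauMap {AP : Type} (M : OPM (Set AP)) (w : OPWord AP) (T : UOT AP)
    (tau : ℕ → List ℕ) : Prop :=
  tau 0 = [] ∧
  T.S = {s | ∃ i, i ≤ w.n + 1 ∧ tau i = s} ∧
  T.hash = {s | tau 0 = s ∨ tau (w.n + 1) = s} ∧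
  (∀ a, T.L a = {s | ∃ i, i ≤ w.n + 1 ∧ tau i = s ∧ i ∈ w.P a}) ∧
  ∀ i, i ≤ w.n →
    ((w.eqp M i (i + 1) ∨ w.ltp M i (i + 1)) → tau (i + 1) = tau i ++ [0]) ∧
    (w.eqp M i (i + 1) → ∀ j, j ≤ w.n + 1 → rdown (tau i) (tau j) → tau j = tau (i + 1)) ∧
    (w.gtp M i (i + 1) → ∀ j, j ≤ w.n + 1 → ¬ rdown (tau i) (tau j)) ∧
    (∀ j, chiDeq w M i j →
      tau j = tau i ++ [{j' | chiDeq w M i j' ∧ j' < j}.ncard + 1])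

/-- `χ(i,j)` with `i ⋖ j` or `i ≐ j` (ω-words). -/
def chiDeqW {AP : Type} (w : OPWordW AP) (M : OPM (Set AP)) (i j : ℕ) : Prop :=
  w.chi M i j ∧ (w.ltp M i j ∨ w.eqp M i j)

/-- `tau` is the map `τ` from the positions of the OP ω-word `w` to the nodes of
    the unranked ordered tree `T = τ(w)`. -/
def IsTauMapW {AP : Type} (M : OPM (Set AP)) (w : OPWordW AP) (T : UOT AP)
    (tau : ℕ → List ℕ) : Prop :=
  tau 0 = [] ∧
  T.S = Set.range tau ∧
  T.hash = {s | tau 0 = s} ∧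
  (∀ a, T.L a = {s | ∃ i, tau i = s ∧ i ∈ w.P a}) ∧
  ∀ i,
    ((w.eqp M i (i + 1) ∨ w.ltp M i (i + 1)) → tau (i + 1) = tau i ++ [0]) ∧
    (w.eqp M i (i + 1) → ∀ j, rdown (tau i) (tau j) → tau j = tau (i + 1)) ∧
    (w.gtp M i (i + 1) → ∀ j, ¬ rdown (tau i) (tau j)) ∧
    (∀ j, chiDeqW w M i j →
      tau j = tau i ++ [{j' | chiDeqW w M i j' ∧ j' < j}.ncard + 1])

/-- `T` is right-recursive, with `f` enumerating the pending nodes obtained by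
    descending through rightmost children from the root. -/
def IsRR {AP : Type} (T : UOT AP) (f : ℕ → List ℕ) : Prop :=
  f 0 = [] ∧ ∀ p, RightmostChild T (f p) (f (p + 1))

/-- `T` is left-recursive, with `g` the node `r_∞` with infinitely many children,
    reached from the root by descending through rightmost children. -/
def IsLR {AP : Type} (T : UOT AP) (g : List ℕ) : Prop :=
  (∃ (m : ℕ) (br : ℕ → List ℕ), br 0 = [] ∧ br m = g ∧
    ∀ p, p < m → RightmostChild T (br p) (br (p + 1))) ∧
  (∀ k : ℕ, g ++ [k] ∈ T.S)

/-- `t^R_w(s^R_p)`: the finite subtree rooted at the pending node `f p`, with the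
    subtree rooted at its rightmost child `f (p+1)` removed. -/
def rrSubtree {AP : Type} (T : UOT AP) (f : ℕ → List ℕ) (p : ℕ) : Set (List ℕ) :=
  {t | t ∈ T.S ∧ f p <+: t ∧ ¬ f (p + 1) <+: t}

/-- `t^L(w,p)`: the finite subtree rooted at the `p`-th child of `r_∞ = g`. -/
def lrSubtree {AP : Type} (T : UOT AP) (g : List ℕ) (p : ℕ) : Set (List ℕ) :=
  {t | t ∈ T.S ∧ (g ++ [p]) <+: t}

/-- `t_f(w)`: the finite tree obtained by removing all children of `r_∞ = g`
    (and their descendants). -/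
def lrTf {AP : Type} (T : UOT AP) (g : List ℕ) : Set (List ℕ) :=
  {t | t ∈ T.S ∧ ¬ ∃ k : ℕ, (g ++ [k]) <+: t}

/-- The relational signature of unranked ordered trees. -/
inductive TreeRel : Type where
  | down : TreeRel
  | right : TreeRel

/-- Interpretation of the tree signature on a set `A` of nodes. -/
def treeRelI (A : Set (List ℕ)) : TreeRel → ↥A → ↥A → Prop
  | .down => fun s t => rdown s.val t.val
  | .right => fun s t => rright s.val t.val

def treeUnI {AP : Type} (T : UOT AP) (A : Set (List ℕ)) : AP → ↥A → Prop :=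
  fun a s => s.val ∈ T.L a

/-- `≡_k` for sentences, between two structures over the same signature. -/
def EquivKSent (R U : Type) {D1 D2 : Type}
    (rel1 : R → D1 → D1 → Prop) (un1 : U → D1 → Prop)
    (rel2 : R → D2 → D2 → Prop) (un2 : U → D2 → Prop) (k : ℕ) : Prop :=
  ∀ φ : FOV R U ℕ, φ.free = ∅ → φ.qr ≤ k →
    ((∀ v, φ.Realize rel1 un1 v) ↔ (∀ v, φ.Realize rel2 un2 v))

/-- `≡_k` between two structures with a distinguished element. -/
def EquivKPt (R U : Type) {D1 D2 : Type}
    (rel1 : R → D1 → D1 → Prop) (un1 : U → D1 → Prop) (a : D1)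
    (rel2 : R → D2 → D2 → Prop) (un2 : U → D2 → Prop) (b : D2) (k : ℕ) : Prop :=
  ∀ φ : FOV R U ℕ, φ.free ⊆ {0} → φ.qr ≤ k →
    (φ.Realize rel1 un1 (fun _ => a) ↔ φ.Realize rel2 un2 (fun _ => b))

/-- The rank-`k` type of the tree structure induced by `T` on the node set `A`. -/
def rankType (AP : Type) (k : ℕ) (T : UOT AP) (A : Set (List ℕ)) :
    Set (FOV TreeRel AP ℕ) :=
  {φ | φ.free = ∅ ∧ φ.qr ≤ k ∧ ∀ v, φ.Realize (treeRelI A) (treeUnI T A) v}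

/-! ### The tree logic `X_until` -/

inductive Xuntil (AP : Type) : Type where
  | tt : Xuntil AP
  | atom (a : AP) : Xuntil AP
  | neg (φ : Xuntil AP) : Xuntil AP
  | andf (φ ψ : Xuntil AP) : Xuntil AP
  | down (φ ψ : Xuntil AP) : Xuntil AP
  | up (φ ψ : Xuntil AP) : Xuntil AP
  | right (φ ψ : Xuntil AP) : Xuntil AP
  | left (φ ψ : Xuntil AP) : Xuntil AP

/-- Strict semantics of `X_until` on a UOT. -/
def XSat {AP : Type} (T : UOT AP) : Xuntil AP → List ℕ → Prop
  | .tt, _ => True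
  | .atom a, s => s ∈ T.L a
  | .neg φ, s => ¬ XSat T φ s
  | .andf φ ψ, s => XSat T φ s ∧ XSat T ψ s
  | .down φ ψ, s => ∃ t ∈ T.S, s <+: t ∧ s ≠ t ∧ XSat T ψ t ∧
      ∀ r ∈ T.S, s <+: r → s ≠ r → r <+: t → r ≠ t → XSat T φ r
  | .up φ ψ, s => ∃ t ∈ T.S, t <+: s ∧ t ≠ s ∧ XSat T ψ t ∧
      ∀ r ∈ T.S, t <+: r → t ≠ r → r <+: s → r ≠ s → XSat T φ r
  | .right φ ψ, s => ∃ (r : List ℕ) (h h' : ℕ), s = r ++ [h] ∧ h < h' ∧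
      r ++ [h'] ∈ T.S ∧ XSat T ψ (r ++ [h']) ∧
      ∀ h'', h < h'' → h'' < h' → XSat T φ (r ++ [h''])
  | .left φ ψ, s => ∃ (r : List ℕ) (h h' : ℕ), s = r ++ [h] ∧ h' < h ∧
      r ++ [h'] ∈ T.S ∧ XSat T ψ (r ++ [h']) ∧
      ∀ h'', h' < h'' → h'' < h → XSat T φ (r ++ [h''])

/-- The subtree of `T_w` rooted at `r`, from which the subtree rooted at `r`'s
    rightmost child has been erased in case `α` holds at that child. -/
def prunedSubtree {AP : Type} (T : UOT AP) (α : Xuntil AP) (r : List ℕ) :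
    Set (List ℕ) :=
  {t | t ∈ T.S ∧ r <+: t ∧ ¬ ∃ c, RightmostChild T r c ∧ XSat T α c ∧ c <+: t}

/-! ### Derived POTL operators -/

section Derived

variable {AP : Type} [Fintype AP]

def bigOr (l : List (POTL AP)) : POTL AP := l.foldr POTL.orf (POTL.neg POTL.tt)
def bigAnd (l : List (POTL AP)) : POTL AP := l.foldr POTL.andf POTL.tt

/-- `σ_a`: exactly the propositions in `a` hold. -/
def sigmaF (a : Set AP) : POTL AP :=
  POTL.andf (bigAnd ((Finset.univ.filter (· ∈ a)).toList.map POTL.atom))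
    (bigAnd ((Finset.univ.filter (· ∉ a)).toList.map fun p => POTL.neg (POTL.atom p)))

/-- All pairs of label sets in the precedence relation `π`. -/
def pairsWith (M : OPM (Set AP)) (π : Prec) : List (Set AP × Set AP) :=
  (Finset.univ.filter
    (fun ab : Set AP × Set AP => M (some ab.1) (some ab.2) = some π)).toList

/-- `χ_F^π γ`: the restriction of `χ_F^d γ` to chains with contexts in `π ∈ {⋖,≐}`. -/
def chiFpi (M : OPM (Set AP)) (π : Prec) (γ : POTL AP) : POTL AP :=
  bigOr ((pairsWith M π).map fun ab =>
    POTL.andf (sigmaF ab.1) (POTL.chiFD (POTL.andf (sigmaF ab.2) γ)))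

/-- `χ_P^π γ`. -/
def chiPpi (M : OPM (Set AP)) (π : Prec) (γ : POTL AP) : POTL AP :=
  bigOr ((pairsWith M π).map fun ab =>
    POTL.andf (sigmaF ab.2) (POTL.chiPD (POTL.andf (sigmaF ab.1) γ)))

/-- `○^⋖ γ`: downward next restricted to the `⋖` relation. -/
def nextLt (M : OPM (Set AP)) (γ : POTL AP) : POTL AP :=
  bigOr ((pairsWith M Prec.lt).map fun ab =>
    POTL.andf (sigmaF ab.1) (POTL.nextD (POTL.andf (sigmaF ab.2) γ)))

/-- `⊖^⋖ γ`: downward back restricted to the `⋖` relation. -/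
def backLt (M : OPM (Set AP)) (γ : POTL AP) : POTL AP :=
  bigOr ((pairsWith M Prec.lt).map fun ab =>
    POTL.andf (sigmaF ab.2) (POTL.backD (POTL.andf (sigmaF ab.1) γ)))

end Derived

end OPLTheory


/-!
Three configurations are impossible: two chains `(h, c)`, `(i, j)` with `h < i < c < j`; a
position `p` inside a chain `(i, j)` joined to `j` by a gap with `p ⋖ j` or `p ≐ j`; and `i`
joined by a gap to a position `p` inside a chain `(i, j)` with `i ≐ p` or `i ⋗ p`. Locating the
inner position of such a configuration between two consecutive terminals of the enclosing chain
always produces a strictly smaller configuration of one of the three kinds, so none exists.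
-/

namespace OPLTheory

variable {prec : ℕ → ℕ → Option Prec}

theorem Body.lt {k j : ℕ} : Body prec k j → k < j
  | .last hkj _ _ => hkj
  | .step hkk _ _ hb => hkk.trans hb.lt

theorem Chain.lt {i j : ℕ} : Chain prec i j → i < j
  | .mk hik _ _ hb => hik.trans hb.lt

theorem Gap.lt {a b : ℕ} : Gap prec a b → a < b
  | .empty hb => by omega
  | .chain hc => hc.lt

theorem Gap.chain_of_add_one_lt {a b : ℕ} (hg : Gap prec a b) (hab : a + 1 < b) :
    Chain prec a b := by
  cases hg with
  | empty hb => omega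
  | chain hc => exact hc

theorem Chain.prec_succ {i j : ℕ} : Chain prec i j → prec i (i + 1) = some .lt
  | .mk _ hlt (.empty hk) _ => hk ▸ hlt
  | .mk _ _ (.chain hc) _ => hc.prec_succ

mutual

theorem Chain.prec_pred {i j : ℕ} : Chain prec i j → prec (j - 1) j = some .gt
  | .mk _ _ _ hb => hb.prec_pred

theorem Body.prec_pred {k j : ℕ} : Body prec k j → prec (j - 1) j = some .gt
  | .last _ hgt (.empty hj) => by subst hj; simpa using hgt
  | .last _ _ (.chain hc) => hc.prec_pred
  | .step _ _ _ hb => hb.prec_pred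

end

/-- `a` and `b` are consecutive among the left context, the terminals and the right context
of a chain `(i, j)`. -/
inductive IsLink (prec : ℕ → ℕ → Option Prec) (i j : ℕ) : ℕ → ℕ → Prop
  | first {b : ℕ} : prec i b = some .lt → Gap prec i b → Body prec b j → IsLink prec i j i b
  | inner {a b : ℕ} : i < a → prec a b = some .eq → Gap prec a b → Body prec b j →
      IsLink prec i j a b
  | last {a : ℕ} : i < a → prec a j = some .gt → Gap prec a j → IsLink prec i j a j

theorem IsLink.gap {i j a b : ℕ} : IsLink prec i j a b → Gap prec a b
  | .first _ hg _ | .inner _ _ hg _ | .last _ _ hg => hg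

theorem IsLink.bounds {i j a b : ℕ} (hl : IsLink prec i j a b) :
    i ≤ a ∧ a < b ∧ b ≤ j ∧ (i < a ∨ b < j) := by
  have hab := hl.gap.lt
  cases hl with
  | first _ _ hb | inner _ _ _ hb => have := hb.lt; omega
  | last hia _ _ => omega

theorem Body.exists_link {i k j p : ℕ} (hb : Body prec k j) (hik : i < k) (hkp : k ≤ p)
    (hpj : p < j) : ∃ a b, a ≤ p ∧ p < b ∧ IsLink prec i j a b := by
  cases hb with
  | last _ hgt hg => exact ⟨k, j, hkp, hpj, .last hik hgt hg⟩
  | @step _ k' _ hkk' heq hg hb' =>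
    by_cases hpk' : p < k'
    · exact ⟨k, k', hkp, hpk', .inner hik heq hg hb'⟩
    · exact hb'.exists_link (hik.trans hkk') (by omega) hpj

theorem Chain.exists_link {i j p : ℕ} (hc : Chain prec i j) (hip : i ≤ p) (hpj : p < j) :
    ∃ a b, a ≤ p ∧ p < b ∧ IsLink prec i j a b := by
  cases hc with
  | @mk _ k _ hik hlt hg hb =>
    by_cases hpk : p < k
    · exact ⟨i, k, hip, hpk, .first hlt hg hb⟩
    · exact hb.exists_link hik (by omega) hpj

/-- The three configurations excluded by infinite descent, indexed by their size. -/
inductive Forbidden (prec : ℕ → ℕ → Option Prec) : ℕ → Prop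
  | cross {h c i j : ℕ} : Chain prec h c → Chain prec i j → h < i → i < c → c < j →
      Forbidden prec (c - h + (j - i))
  | right {i j p : ℕ} : Chain prec i j → Gap prec p j → i < p → p < j →
      prec p j ≠ some .gt → Forbidden prec (j - i + (j - p))
  | left {i j p : ℕ} : Chain prec i j → Gap prec i p → i < p → p < j →
      prec i p ≠ some .lt → Forbidden prec (j - i + (p - i))

theorem Forbidden.descent_of_cross {h c i j : ℕ} (hhc : Chain prec h c) (hij : Chain prec i j)
    (hhi : h < i) (hic : i < c) (hcj : c < j) : ∃ m < c - h + (j - i), Forbidden prec m := by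
  obtain ⟨a, b, hai, hib, hl⟩ := hhc.exists_link hhi.le hic
  obtain ⟨hha, -, hbc, hshort⟩ := hl.bounds
  rcases hai.lt_or_eq with hai | rfl
  · exact ⟨_, by omega, .cross (hl.gap.chain_of_add_one_lt (by omega)) hij hai hib (by omega)⟩
  · cases hl with
    | first => omega
    | inner _ heq hg _ => exact ⟨_, by omega, .left hij hg hib (by omega) (by simp [heq])⟩
    | last _ hgt hg => exact ⟨_, by omega, .left hij hg hib hcj (by simp [hgt])⟩

theorem Forbidden.descent_of_right {i j p : ℕ} (hij : Chain prec i j) (hg : Gap prec p j)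
    (hip : i < p) (hpj : p < j) (hne : prec p j ≠ some .gt) :
    ∃ m < j - i + (j - p), Forbidden prec m := by
  cases hg with
  | empty hj => exact absurd (by simpa [hj] using hij.prec_pred) hne
  | chain hpj' =>
    obtain ⟨a, b, hap, hpb, hl⟩ := hij.exists_link hip.le hpj
    obtain ⟨hia, -, hbj, hshort⟩ := hl.bounds
    rcases hap.lt_or_eq with hap | rfl
    · have hab := hl.gap.chain_of_add_one_lt (by omega)
      rcases hbj.lt_or_eq with hbj | rfl
      · exact ⟨_, by omega, .cross hab hpj' hap hpb hbj⟩
      · exact ⟨_, by omega, .right hab (.chain hpj') hap hpj hne⟩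
    · cases hl with
      | first => omega
      | inner _ heq hg hb => exact ⟨_, by omega, .left hpj' hg hpb hb.lt (by simp [heq])⟩
      | last _ hgt _ => exact absurd hgt hne

theorem Forbidden.descent_of_left {i j p : ℕ} (hij : Chain prec i j) (hg : Gap prec i p)
    (hip : i < p) (hpj : p < j) (hne : prec i p ≠ some .lt) :
    ∃ m < j - i + (p - i), Forbidden prec m := by
  cases hg with
  | empty hp => exact absurd (hp ▸ hij.prec_succ) hne
  | chain hip' =>
    obtain ⟨a, b, hap, hpb, hl⟩ := hij.exists_link (p := p - 1) (by omega) (by omega)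
    obtain ⟨hia, -, hbj, hshort⟩ := hl.bounds
    rcases (show p ≤ b by omega).lt_or_eq with hpb | rfl
    · have hab := hl.gap.chain_of_add_one_lt (by omega)
      rcases hia.lt_or_eq with hia | rfl
      · exact ⟨_, by omega, .cross hip' hab hia (by omega) hpb⟩
      · exact ⟨_, by omega, .left hab (.chain hip') hip hpb hne⟩
    · cases hl with
      | first hlt => exact absurd hlt hne
      | inner hia heq hg _ => exact ⟨_, by omega, .right hip' hg hia (by omega) (by simp [heq])⟩
      | last => omega

theorem Forbidden.descent {n : ℕ} : Forbidden prec n → ∃ m < n, Forbidden prec m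
  | .cross hhc hij hhi hic hcj => descent_of_cross hhc hij hhi hic hcj
  | .right hij hg hip hpj hne => descent_of_right hij hg hip hpj hne
  | .left hij hg hip hpj hne => descent_of_left hij hg hip hpj hne

theorem not_forbidden (n : ℕ) : ¬ Forbidden prec n := by
  induction n using Nat.strong_induction_on with
  | _ n ih =>
    intro hf
    obtain ⟨m, hmn, hm⟩ := hf.descent
    exact ih m hmn hm

theorem Chain.not_cross {h c i j : ℕ} (hhc : Chain prec h c) (hij : Chain prec i j)
    (hhi : h < i) (hic : i < c) : j ≤ c :=
  not_lt.mp fun hcj => not_forbidden _ (.cross hhc hij hhi hic hcj)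

/-- The chain relation never crosses itself. -/
theorem chi_never_crosses {AP : Type} (M : OPM (Set AP)) (w : OPWord AP)
    (hw : w.Compatible M) (i j h k : ℕ)
    (hij : w.chi M i j) (hhk : w.chi M h k) :
    (i < h → h < j → k ≤ j) ∧ (i < k → k < j → i ≤ h) := by
  refine ⟨hij.2.2.not_cross hhk.2.2, fun hik hkj => ?_⟩
  by_contra! hhi
  have := hhk.2.2.not_cross hij.2.2 hhi hik
  omega

end OPLTheory
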